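/- arXiv:1503.08365 — 4 statements merged into one kernel-verified Lean document; each statement's English description precedes it below -/
import Mathlib

section
/- For every even integer M ≥ 2, the sum Σ_{m ≤ M, m odd} 1/m lies in the interval [½(log M + γ + log 2) + 1/(12M²) − 2/(15M⁴), ½(log M + γ + log 2) + 1/(12M²) + 1/(60M⁴)], where γ is the Euler–Mascheroni constant. -/
open Real Finset Filter Topology

private lemma odd_logser (x : ℝ) (h0 : 0 < x) (h2 : x ≤ 1/2) :
    |(x + x^2/2 + x^3/3 + x^4/4 + x^5/5 + x^6/6 + x^7/7 + x^8/8 + x^9/9) + log (1 - x)|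
      ≤ 2 * x^10 := by
  have hx : |x| < 1 := by rw [abs_of_pos h0]; linarith
  have h := Real.abs_log_sub_add_sum_range_le hx 9
  simp only [Finset.sum_range_succ, Finset.sum_range_zero] at h
  rw [abs_of_pos h0] at h
  norm_num at h
  have h1 : x ^ 10 / (1 - x) ≤ 2 * x^10 := by
    rw [div_le_iff₀ (by linarith)]
    nlinarith [pow_nonneg h0.le 10]
  calc |(x + x^2/2 + x^3/3 + x^4/4 + x^5/5 + x^6/6 + x^7/7 + x^8/8 + x^9/9) + log (1 - x)|
      = |x + x ^ 2 / 2 + x ^ 3 / 3 + x ^ 4 / 4 + x ^ 5 / 5 + x ^ 6 / 6 + x ^ 7 / 7 + x ^ 8 / 8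
          + x ^ 9 / 9 + log (1-x)| := by ring_nf
    _ ≤ x ^ 10 / (1 - x) := h
    _ ≤ 2 * x^10 := h1

private lemma odd_keyA (x : ℝ) (h0 : 0 < x) (h2 : x ≤ 1/2) :
    x/(2*(1-x)) + x/2 - x^2/(12*(1-x)^2) + x^2/12 ≤ -log (1-x) := by
  have h1x : (0:ℝ) < 1 - x := by linarith
  obtain ⟨hl, _⟩ := abs_le.mp (odd_logser x h0 h2)
  have hS : x + x^2/2 + x^3/3 + x^4/4 + x^5/5 + x^6/6 + x^7/7 + x^8/8 + x^9/9 - 2*x^10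
      ≤ -log (1-x) := by linarith
  refine le_trans ?_ hS
  rw [← sub_nonneg]
  have heq : x + x^2/2 + x^3/3 + x^4/4 + x^5/5 + x^6/6 + x^7/7 + x^8/8 + x^9/9 - 2*x^10
      - (x/(2*(1-x)) + x/2 - x^2/(12*(1-x)^2) + x^2/12)
      = x^5 * (84 + 42*x + 24*x^2 + 15*x^3 + 10*x^4 - 5285*x^5 + 10360*x^6 - 5040*x^7)
        / (2520*(1-x)^2) := by
    field_simp
    ring
  rw [heq]
  apply div_nonneg _ (by positivity)
  apply mul_nonneg (by positivity)
  nlinarith [pow_nonneg h0.le 2, pow_nonneg h0.le 3, pow_nonneg h0.le 4,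
    mul_nonneg (pow_nonneg h0.le 4) (sub_nonneg.2 h2),
    mul_nonneg (pow_nonneg h0.le 5) (sub_nonneg.2 h2),
    mul_nonneg (pow_nonneg h0.le 6) (sub_nonneg.2 h2),
    mul_nonneg (mul_nonneg (pow_nonneg h0.le 4) (sub_nonneg.2 h2)) (sub_nonneg.2 h2),
    mul_nonneg (mul_nonneg (pow_nonneg h0.le 5) (sub_nonneg.2 h2)) (sub_nonneg.2 h2)]

private lemma odd_keyB (x : ℝ) (h0 : 0 < x) (h2 : x ≤ 1/2) :
    -log (1-x) ≤ x/(2*(1-x)) + x/2 - x^2/(12*(1-x)^2) + x^2/12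
      + (1/60)*(x^4/(1-x)^4 - x^4) := by
  have h1x : (0:ℝ) < 1 - x := by linarith
  obtain ⟨_, hu⟩ := abs_le.mp (odd_logser x h0 h2)
  have hS : -log (1-x)
      ≤ x + x^2/2 + x^3/3 + x^4/4 + x^5/5 + x^6/6 + x^7/7 + x^8/8 + x^9/9 + 2*x^10 := by
    linarith
  refine hS.trans ?_
  rw [← sub_nonneg]
  have heq : x/(2*(1-x)) + x/2 - x^2/(12*(1-x)^2) + x^2/12 + (1/60)*(x^4/(1-x)^4 - x^4)
      - (x + x^2/2 + x^3/3 + x^4/4 + x^5/5 + x^6/6 + x^7/7 + x^8/8 + x^9/9 + 2*x^10)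
      = x^5 * (84 - 126*x + 144*x^2 - 51*x^3 - 4*x^4 - 4790*x^5 + 19380*x^6 - 29435*x^7
          + 19880*x^8 - 5040*x^9) / (2520*(1-x)^4) := by
    field_simp
    ring
  rw [heq]
  apply div_nonneg _ (by positivity)
  apply mul_nonneg (by positivity)
  nlinarith [pow_nonneg h0.le 2, pow_nonneg h0.le 3, pow_nonneg h0.le 4,
    mul_nonneg (pow_nonneg h0.le 4) (sub_nonneg.2 h2),
    mul_nonneg (pow_nonneg h0.le 5) (sub_nonneg.2 h2),
    mul_nonneg (pow_nonneg h0.le 6) (sub_nonneg.2 h2),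
    mul_nonneg (pow_nonneg h0.le 7) (sub_nonneg.2 h2),
    mul_nonneg (mul_nonneg (pow_nonneg h0.le 4) (sub_nonneg.2 h2)) (sub_nonneg.2 h2),
    mul_nonneg (mul_nonneg (pow_nonneg h0.le 5) (sub_nonneg.2 h2)) (sub_nonneg.2 h2),
    mul_nonneg (mul_nonneg (pow_nonneg h0.le 6) (sub_nonneg.2 h2)) (sub_nonneg.2 h2),
    mul_nonneg (mul_nonneg (pow_nonneg h0.le 7) (sub_nonneg.2 h2)) (sub_nonneg.2 h2)]

private lemma odd_estep (t : ℝ) (ht : 1 ≤ t) :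
    0 ≤ log (t+1) - log t - 1/(2*t) - 1/(2*(t+1)) + 1/(12*t^2) - 1/(12*(t+1)^2) ∧
    log (t+1) - log t - 1/(2*t) - 1/(2*(t+1)) + 1/(12*t^2) - 1/(12*(t+1)^2)
      ≤ 1/60 * (1/t^4 - 1/(t+1)^4) := by
  have ht0 : (0:ℝ) < t := by linarith
  have ht1 : (0:ℝ) < t + 1 := by linarith
  set x : ℝ := 1/(t+1) with hx
  have h0 : 0 < x := by positivity
  have h2 : x ≤ 1/2 := by rw [hx, div_le_div_iff₀ ht1 (by norm_num)]; linarith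
  have h1mx : 1 - x = t/(t+1) := by rw [hx]; field_simp; ring
  have hlog : -log (1-x) = log (t+1) - log t := by
    rw [h1mx, log_div ht0.ne' ht1.ne']; ring
  have e1 : x/(2*(1-x)) = 1/(2*t) := by rw [hx, h1mx]; field_simp
  have e2 : x/2 = 1/(2*(t+1)) := by rw [hx]; field_simp
  have e3 : x^2/(12*(1-x)^2) = 1/(12*t^2) := by
    rw [hx, h1mx]; field_simp
  have e4 : x^2/12 = 1/(12*(t+1)^2) := by rw [hx]; field_simp
  have e5 : x^4/(1-x)^4 = 1/t^4 := by rw [hx, h1mx]; field_simp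
  have e6 : x^4 = 1/(t+1)^4 := by rw [hx]; field_simp
  have hA := odd_keyA x h0 h2
  have hB := odd_keyB x h0 h2
  rw [hlog, e1, e2, e3, e4] at hA
  rw [hlog, e1, e2, e3, e4, e5, e6] at hB
  constructor <;> linarith

noncomputable def emf (n : ℕ) : ℝ :=
  (harmonic n : ℝ) - Real.log n - 1/(2*n) + 1/(12*n^2)

lemma emf_tendsto : Tendsto emf atTop (𝓝 Real.eulerMascheroniConstant) := by
  have h1 : Tendsto (fun n : ℕ => (harmonic n : ℝ) - Real.log n) atTop
      (𝓝 Real.eulerMascheroniConstant) := Real.tendsto_harmonic_sub_log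
  have h0 : Tendsto (fun n : ℕ => 1/(n:ℝ)) atTop (𝓝 0) := tendsto_one_div_atTop_nhds_zero_nat
  have h2 : Tendsto (fun n : ℕ => 1/(2*(n:ℝ))) atTop (𝓝 0) := by
    have := h0.const_mul (1/2 : ℝ)
    rw [mul_zero] at this
    exact this.congr (fun n => by ring)
  have h3 : Tendsto (fun n : ℕ => 1/(12*(n:ℝ)^2)) atTop (𝓝 0) := by
    have := (h0.mul h0).const_mul (1/12 : ℝ)
    rw [mul_zero, mul_zero] at this
    exact this.congr (fun n => by ring)
  have h := (h1.sub h2).add h3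
  rw [sub_zero, add_zero] at h
  exact h.congr (fun n => rfl)

lemma emf_step (n : ℕ) (hn : 1 ≤ n) :
    emf n - emf (n+1) = log ((n:ℝ)+1) - log n - 1/(2*(n:ℝ)) - 1/(2*((n:ℝ)+1))
      + 1/(12*(n:ℝ)^2) - 1/(12*((n:ℝ)+1)^2) := by
  have hn0 : (0:ℝ) < n := by exact_mod_cast hn
  simp only [emf, harmonic_succ]
  push_cast
  field_simp
  ring

lemma emf_bounds (N : ℕ) (hN : 1 ≤ N) :
    Real.eulerMascheroniConstant ≤ emf N ∧
    emf N ≤ Real.eulerMascheroniConstant + 1/(60*(N:ℝ)^4) := by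
  have key : ∀ m, N ≤ m → emf m ≤ emf N ∧
      emf N - 1/(60*(N:ℝ)^4) ≤ emf m - 1/(60*(m:ℝ)^4) := by
    intro m hm
    induction m, hm using Nat.le_induction with
    | base => exact ⟨le_refl _, le_refl _⟩
    | succ m hm ih =>
      have hm1 : 1 ≤ m := le_trans hN hm
      have ht : (1:ℝ) ≤ m := by exact_mod_cast hm1
      have hs := odd_estep (m:ℝ) ht
      have hstep := emf_step m hm1
      have hc : ((m+1 : ℕ):ℝ) = (m:ℝ)+1 := by push_cast; ring
      have d1 : 1/(60*(m:ℝ)^4) = 1/60 * (1/(m:ℝ)^4) := by ring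
      have d2 : 1/(60*((m:ℝ)+1)^4) = 1/60 * (1/((m:ℝ)+1)^4) := by
        rw [one_div, mul_inv]; ring
      constructor
      · have : emf (m+1) ≤ emf m := by linarith [hs.1, hstep]
        exact this.trans ih.1
      · refine le_trans ih.2 ?_
        rw [hc]
        linarith [hs.2, hstep]
  constructor
  · refine le_of_tendsto emf_tendsto ?_
    filter_upwards [eventually_ge_atTop N] with m hm using (key m hm).1
  · rw [← sub_le_iff_le_add]
    have : Tendsto (fun m : ℕ => emf m - 1/(60*(m:ℝ)^4)) atTop
        (𝓝 Real.eulerMascheroniConstant) := by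
      have h4 : Tendsto (fun m : ℕ => 1/(60*(m:ℝ)^4)) atTop (𝓝 0) := by
        have h0 : Tendsto (fun n : ℕ => 1/(n:ℝ)) atTop (𝓝 0) :=
          tendsto_one_div_atTop_nhds_zero_nat
        have := ((h0.mul h0).mul (h0.mul h0)).const_mul (1/60 : ℝ)
        simp only [mul_zero] at this
        exact this.congr (fun n => by ring)
      have := emf_tendsto.sub h4
      rwa [sub_zero] at this
    refine ge_of_tendsto this ?_
    filter_upwards [eventually_ge_atTop N] with m hm using (key m hm).2

lemma sum_Icc_recip (N : ℕ) : ∑ m ∈ Finset.Icc 1 N, (1:ℝ)/m = (harmonic N : ℝ) := by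
  rw [harmonic_eq_sum_Icc]
  push_cast
  simp [one_div]

lemma even_sum (K : ℕ) :
    ∑ m ∈ (Finset.Icc 1 (2*K)).filter (fun m => ¬ Odd m), (1:ℝ)/m
      = (1/2) * ∑ k ∈ Finset.Icc 1 K, (1:ℝ)/k := by
  induction K with
  | zero => simp
  | succ K ih =>
    have h1 : 2*(K+1) = (2*K+1)+1 := by ring
    rw [h1, Finset.sum_filter, Finset.sum_Icc_succ_top (by omega),
      Finset.sum_Icc_succ_top (by omega), ← Finset.sum_filter,
      Finset.sum_Icc_succ_top (by omega), ih]
    have h2 : Odd (2*K+1) := ⟨K, by ring⟩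
    have h3 : ¬ Odd (2*K+1+1) := by simp [Nat.odd_iff]; omega
    rw [if_neg (not_not_intro h2), if_pos h3]
    push_cast
    field_simp
    ring

theorem odd_harmonic_sum (M : ℕ) (hM : 2 ≤ M) (hEven : Even M) :
    (∑ m ∈ (Finset.Icc 1 M).filter (fun m => Odd m), (1 : ℝ) / m)
      ∈ Set.Icc
        ((Real.log M + Real.eulerMascheroniConstant + Real.log 2) / 2
          + 1 / (12 * M ^ 2) - 2 / (15 * M ^ 4))
        ((Real.log M + Real.eulerMascheroniConstant + Real.log 2) / 2
          + 1 / (12 * M ^ 2) + 1 / (60 * M ^ 4)) := by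
  obtain ⟨K, hK⟩ := hEven
  have hK' : M = 2 * K := by omega
  subst hK'
  have hK1 : 1 ≤ K := by omega
  set k : ℝ := (K:ℝ) with hkdef
  have hk1 : (1:ℝ) ≤ k := by rw [hkdef]; exact_mod_cast hK1
  have hk0 : (0:ℝ) < k := by linarith
  -- sum splitting
  have hsplit : (∑ m ∈ (Finset.Icc 1 (2*K)).filter (fun m => Odd m), (1 : ℝ) / m)
      = (harmonic (2*K) : ℝ) - (1/2) * (harmonic K : ℝ) := by
    have h := Finset.sum_filter_add_sum_filter_not (Finset.Icc 1 (2*K))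
      (fun m => Odd m) (fun m => (1:ℝ)/m)
    rw [even_sum K, sum_Icc_recip (2*K), sum_Icc_recip K] at h
    linarith
  rw [hsplit]
  -- Euler-Maclaurin bounds
  have hb2 := emf_bounds (2*K) (by omega)
  have hb1 := emf_bounds K hK1
  simp only [emf] at hb1 hb2
  have hc2 : ((2*K : ℕ):ℝ) = 2*k := by push_cast; ring
  rw [hc2] at hb2
  have hlog : Real.log (2*k) = Real.log 2 + Real.log k := by
    rw [Real.log_mul (by norm_num) hk0.ne']
  rw [hlog] at hb2
  -- atom conversions
  have a1 : 1/(2*(2*k)) = 1/4 * (1/k) := by ring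
  have a2 : 1/(12*(2*k)^2) = 1/48 * (1/k^2) := by ring
  have a3 : 1/(60*(2*k)^4) = 1/960 * (1/k^4) := by ring
  have a4 : 1/(2*k) = 1/2 * (1/k) := by ring
  have a5 : 1/(12*k^2) = 1/12 * (1/k^2) := by ring
  have a6 : 1/(60*k^4) = 1/60 * (1/k^4) := by ring
  have g1 : 1/(12*((2*K : ℕ):ℝ)^2) = 1/48 * (1/k^2) := by rw [hc2]; ring
  have g2 : 2/(15*((2*K : ℕ):ℝ)^4) = 1/120 * (1/k^4) := by rw [hc2]; ring
  have g3 : 1/(60*((2*K : ℕ):ℝ)^4) = 1/960 * (1/k^4) := by rw [hc2]; ring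
  have glog : Real.log ((2*K : ℕ):ℝ) = Real.log 2 + Real.log k := by rw [hc2, hlog]
  constructor
  · rw [glog, g1, g2]
    linarith [hb2.1, hb1.2, a1, a2, a3, a4, a5, a6]
  · rw [glog, g1, g3]
    linarith [hb2.2, hb1.1, a1, a2, a3, a4, a5, a6]
end

section
/- Let c₀, c₁ > 0 and let F : ℝ → ℝ be differentiable on (0,∞) with |1 − F(t)| ≤ c₀/t² and |F′(t)| ≤ c₁/t² for all t > 0. Define G_F(u) = Σ_{ℓ≥0} (1 − F(2^ℓ u))/2^ℓ. Then for every u ≥ T > 0, |d/du (G_F(u)/u)| ≤ 8c₀/(7T⁴) + 4c₁/(3T³). -/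
/-!
Write `G u = ∑ φ (2^ℓ u) / 2^ℓ` with `φ = 1 - F`. The decay `|φ t|, |φ' t| ≤ c / t²` makes
the `ℓ`-th term of `G` and of its termwise derivative `∑ φ' (2^ℓ u)` of size `8^{-ℓ}` and `4^{-ℓ}`
respectively, uniformly for `u` away from `0`, so `G` may be differentiated termwise and
`|G u| ≤ (8/7) c₀ / u²`, `|G' u| ≤ (4/3) c₁ / u²`. The quotient rule
`(G/u)' = G'/u - G/u²` then gives the bound at `u`, which is decreasing in `u ≥ T`.
-/

open Real

section InverseSquareDecay

variable {φ : ℝ → ℝ} {c : ℝ}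

lemma nonneg_of_abs_le_div_sq (hφ : ∀ t : ℝ, 0 < t → |φ t| ≤ c / t ^ 2) : 0 ≤ c := by
  simpa using (abs_nonneg _).trans (hφ 1 one_pos)

lemma abs_comp_two_pow_mul_le (hφ : ∀ t : ℝ, 0 < t → |φ t| ≤ c / t ^ 2) {x : ℝ} (hx : 0 < x)
    (n : ℕ) : |φ (2 ^ n * x)| ≤ c / x ^ 2 * (1 / 4) ^ n := by
  calc |φ (2 ^ n * x)| ≤ c / (2 ^ n * x) ^ 2 := hφ _ (by positivity)
    _ = c / x ^ 2 * (1 / 4) ^ n := by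
      rw [mul_pow, ← pow_mul, mul_comm n 2, pow_mul, one_div_pow]
      norm_num
      ring

lemma abs_comp_two_pow_mul_div_le (hφ : ∀ t : ℝ, 0 < t → |φ t| ≤ c / t ^ 2) {x : ℝ}
    (hx : 0 < x) (n : ℕ) : |φ (2 ^ n * x) / 2 ^ n| ≤ c / x ^ 2 * (1 / 8) ^ n := by
  calc |φ (2 ^ n * x) / 2 ^ n| = |φ (2 ^ n * x)| / 2 ^ n := by
        rw [abs_div, abs_pow, abs_two]
    _ ≤ c / x ^ 2 * (1 / 4) ^ n / 2 ^ n := by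
        gcongr
        exact abs_comp_two_pow_mul_le hφ hx n
    _ = c / x ^ 2 * (1 / 8) ^ n := by
        rw [mul_div_assoc, ← div_pow]
        norm_num

end InverseSquareDecay

lemma summable_of_abs_le_geometric {f : ℕ → ℝ} {C r : ℝ} (hr₀ : 0 ≤ r) (hr₁ : r < 1)
    (hf : ∀ n, |f n| ≤ C * r ^ n) : Summable f :=
  .of_norm_bounded ((summable_geometric_of_lt_one hr₀ hr₁).mul_left C) hf

lemma abs_tsum_le_of_abs_le_geometric {f : ℕ → ℝ} {C r : ℝ} (hr₀ : 0 ≤ r) (hr₁ : r < 1)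
    (hf : ∀ n, |f n| ≤ C * r ^ n) : |∑' n, f n| ≤ C * (1 - r)⁻¹ :=
  (Real.norm_eq_abs _).symm.trans_le <|
    tsum_of_norm_bounded ((hasSum_geometric_of_lt_one hr₀ hr₁).mul_left C) hf

lemma hasDerivAt_comp_two_pow_mul_div {φ : ℝ → ℝ} {x : ℝ} (n : ℕ)
    (hφ : DifferentiableAt ℝ φ (2 ^ n * x)) :
    HasDerivAt (fun y => φ (2 ^ n * y) / 2 ^ n) (deriv φ (2 ^ n * x)) x := by
  have h := (hφ.hasDerivAt.comp x ((hasDerivAt_id' x).const_mul (2 ^ n))).div_const (2 ^ n)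
  rwa [mul_one, mul_div_cancel_right₀ _ (pow_ne_zero n two_ne_zero)] at h

theorem hasDerivAt_tsum_comp_two_pow_mul_div {φ : ℝ → ℝ} {c u : ℝ} (hu : 0 < u)
    (hdiff : ∀ t : ℝ, 0 < t → DifferentiableAt ℝ φ t)
    (hφ' : ∀ t : ℝ, 0 < t → |deriv φ t| ≤ c / t ^ 2)
    (hsum : Summable fun ℓ : ℕ => φ (2 ^ ℓ * u) / 2 ^ ℓ) :
    HasDerivAt (fun x => ∑' ℓ : ℕ, φ (2 ^ ℓ * x) / 2 ^ ℓ) (∑' ℓ : ℕ, deriv φ (2 ^ ℓ * u)) u := by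
  have hc := nonneg_of_abs_le_div_sq hφ'
  have hu₂ : u ∈ Set.Ioi (u / 2) := by simp only [Set.mem_Ioi]; linarith
  have hmajorant : Summable fun ℓ : ℕ => c / (u / 2) ^ 2 * (1 / 4 : ℝ) ^ ℓ :=
    (summable_geometric_of_lt_one (by norm_num) (by norm_num)).mul_left _
  refine hasDerivAt_tsum_of_isPreconnected (g := fun ℓ x => φ (2 ^ ℓ * x) / 2 ^ ℓ)
    (g' := fun ℓ x => deriv φ (2 ^ ℓ * x)) hmajorant isOpen_Ioi isPreconnected_Ioi
    (fun ℓ x hx => ?_) (fun ℓ x hx => ?_) hu₂ hsum hu₂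
  · have hx : (0 : ℝ) < x := lt_trans (by linarith) hx
    exact hasDerivAt_comp_two_pow_mul_div ℓ (hdiff _ (by positivity))
  · have hx : u / 2 < x := hx
    calc ‖deriv φ (2 ^ ℓ * x)‖ ≤ c / x ^ 2 * (1 / 4) ^ ℓ :=
          abs_comp_two_pow_mul_le hφ' (by linarith) ℓ
      _ ≤ c / (u / 2) ^ 2 * (1 / 4) ^ ℓ := by gcongr

lemma abs_deriv_div_self_le {G : ℝ → ℝ} {G' A B u : ℝ} (hG : HasDerivAt G G' u) (hu : 0 < u)
    (hG' : |G'| ≤ A) (hGu : |G u| ≤ B) : |deriv (fun x => G x / x) u| ≤ A / u + B / u ^ 2 := by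
  have hquot : HasDerivAt (fun x => G x / x) ((G' * u - G u * 1) / u ^ 2) u :=
    hG.div (hasDerivAt_id u) hu.ne'
  rw [hquot.deriv, mul_one, abs_div, abs_of_pos (pow_pos hu 2)]
  calc |G' * u - G u| / u ^ 2 ≤ (A * u + B) / u ^ 2 := by
        gcongr
        calc |G' * u - G u| ≤ |G' * u| + |G u| := abs_sub _ _
          _ ≤ A * u + B := by rw [abs_mul, abs_of_pos hu]; gcongr
    _ = A / u + B / u ^ 2 := by field_simp

theorem deriv_GF_div_bound_general (c₀ c₁ : ℝ)
    (F : ℝ → ℝ)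
    (hdiff : ∀ t : ℝ, 0 < t → DifferentiableAt ℝ F t)
    (h0 : ∀ t : ℝ, 0 < t → |1 - F t| ≤ c₀ / t ^ 2)
    (h1 : ∀ t : ℝ, 0 < t → |deriv F t| ≤ c₁ / t ^ 2) :
    ∀ T u : ℝ, 0 < T → T ≤ u →
      |deriv (fun x : ℝ => (∑' ℓ : ℕ, (1 - F (2 ^ ℓ * x)) / 2 ^ ℓ) / x) u|
        ≤ 8 * c₀ / (7 * T ^ 4) + 4 * c₁ / (3 * T ^ 3) := by
  intro T u hT hTu
  have hu : 0 < u := hT.trans_le hTu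
  have hderiv : ∀ t, deriv (fun y => 1 - F y) t = -deriv F t := fun t => deriv_const_sub 1
  have hφ' : ∀ t : ℝ, 0 < t → |deriv (fun y => 1 - F y) t| ≤ c₁ / t ^ 2 := by
    simpa only [hderiv, abs_neg] using h1
  have hG := hasDerivAt_tsum_comp_two_pow_mul_div hu
    (fun t ht => (differentiableAt_const 1).sub (hdiff t ht)) hφ'
    (summable_of_abs_le_geometric (by norm_num) (by norm_num)
      (abs_comp_two_pow_mul_div_le (φ := fun y => 1 - F y) h0 hu))
  have hG' := abs_tsum_le_of_abs_le_geometric (by norm_num) (by norm_num)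
    (abs_comp_two_pow_mul_le hφ' hu)
  have hGu := abs_tsum_le_of_abs_le_geometric (by norm_num) (by norm_num)
    (abs_comp_two_pow_mul_div_le (φ := fun y => 1 - F y) h0 hu)
  calc _ ≤ c₁ / u ^ 2 * (1 - 1 / 4)⁻¹ / u + c₀ / u ^ 2 * (1 - 1 / 8)⁻¹ / u ^ 2 :=
        abs_deriv_div_self_le hG hu hG' hGu
    _ = 8 * c₀ / (7 * u ^ 4) + 4 * c₁ / (3 * u ^ 3) := by field_simp; ring
    _ ≤ 8 * c₀ / (7 * T ^ 4) + 4 * c₁ / (3 * T ^ 3) := by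
        have := nonneg_of_abs_le_div_sq h0
        have := nonneg_of_abs_le_div_sq h1
        gcongr

theorem deriv_GF_div_bound (c₀ c₁ : ℝ) (hc₀ : 0 < c₀) (hc₁ : 0 < c₁)
    (F : ℝ → ℝ)
    (hdiff : ∀ t : ℝ, 0 < t → DifferentiableAt ℝ F t)
    (h0 : ∀ t : ℝ, 0 < t → |1 - F t| ≤ c₀ / t ^ 2)
    (h1 : ∀ t : ℝ, 0 < t → |deriv F t| ≤ c₁ / t ^ 2) :
    ∀ T u : ℝ, 0 < T → T ≤ u →
      |deriv (fun x : ℝ => (∑' ℓ : ℕ, (1 - F (2 ^ ℓ * x)) / 2 ^ ℓ) / x) u|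
        ≤ 8 * c₀ / (7 * T ^ 4) + 4 * c₁ / (3 * T ^ 3) :=
  deriv_GF_div_bound_general c₀ c₁ F hdiff h0 h1
end

section
/- For all real numbers L ≥ 0 and u with 10^{-5} ≤ u ≤ 1, the tail R_L(u) = Σ_{ℓ ≥ L+1} ∫₀^{1/2} ψ(v) sin(2^{ℓ+1}πuv)/2^ℓ dv, with ψ(v) = cot(πv) − πv/sin²(πv), satisfies |R_L(u)| ≤ π⁴u/(504·8^L) + (π³/48)(1/2^L − 1/(7·8^L)). -/
/-!
With `x = πv` one has `ψ(v) = (sin 2x / 2 - x) / sin² x`, so the Taylor bound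
`|y - sin y| ≤ |y|³/6` for the numerator and Jordan's inequality `sin x ≥ 2x/π` for the
denominator give `|ψ(v)| ≤ π³v/6` on `(0, 1/2]`. In the `ℓ`-th integral, whose frequency is
`c = 2^{ℓ+1}πu`, bound `|sin(cv)|` by `cv` below `v = 2^{-(ℓ+1)}` and by `1` above it. After
division by `2^ℓ` this leaves a combination of `2^{-ℓ}` and `8^{-ℓ}`, whose tails over `ℓ ≥ L+1`
are geometric series.
-/

open Real MeasureTheory intervalIntegral Set

theorem hasSum_geometric_tail {K : Type*} [NormedField K] {r : K} (hr : ‖r‖ < 1) (N : ℕ) :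
    HasSum (fun n => if N ≤ n then r ^ n else 0) (r ^ N * (1 - r)⁻¹) := by
  rw [← hasSum_nat_add_iff' N]
  have hhead : ∑ i ∈ Finset.range N, (if N ≤ i then r ^ i else 0) = 0 :=
    Finset.sum_eq_zero fun i hi => if_neg (by simpa using hi)
  rw [hhead, sub_zero]
  simp only [Nat.le_add_left, if_true, pow_add]
  simpa only [mul_comm] using (hasSum_geometric_of_norm_lt_one hr).mul_left (r ^ N)

noncomputable def psi (v : ℝ) : ℝ :=
  cos (π * v) / sin (π * v) - π * v / sin (π * v) ^ 2

theorem measurable_psi : Measurable psi := by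
  unfold psi
  fun_prop

theorem abs_psi_le {v : ℝ} (hv : 0 < v) (hv2 : v ≤ 1 / 2) : |psi v| ≤ π ^ 3 * v / 6 := by
  set x := π * v with hx
  have hx0 : 0 < x := by positivity
  have hsin : 2 * v ≤ sin x := by
    calc 2 * v = 2 / π * x := by rw [hx]; field_simp
      _ ≤ sin x := mul_le_sin hx0.le (by rw [hx]; nlinarith [pi_pos])
  have hpsi : psi v = -(x - sin (2 * x) / 2) / sin x ^ 2 := by
    rw [psi, sin_two_mul]
    field_simp
    ring
  have hnum : |x - sin (2 * x) / 2| ≤ 2 * π ^ 3 * v ^ 3 / 3 := by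
    have h := abs_sub_sin_le (2 * x)
    rw [abs_of_pos (by positivity : 0 < 2 * x)] at h
    calc |x - sin (2 * x) / 2| = |2 * x - sin (2 * x)| / 2 := by
          rw [show x - sin (2 * x) / 2 = (2 * x - sin (2 * x)) / 2 by ring, abs_div, abs_two]
      _ ≤ (2 * x) ^ 3 / 6 / 2 := by gcongr
      _ = 2 * π ^ 3 * v ^ 3 / 3 := by ring
  rw [hpsi, abs_div, abs_neg, abs_of_pos (pow_pos (by linarith : 0 < sin x) 2)]
  calc |x - sin (2 * x) / 2| / sin x ^ 2 ≤ (2 * π ^ 3 * v ^ 3 / 3) / (2 * v) ^ 2 :=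
        div_le_div₀ (by positivity) hnum (by positivity) (by gcongr)
    _ = π ^ 3 * v / 6 := by field_simp; ring

theorem abs_psi_mul_sin_le (c : ℝ) {v : ℝ} (hv : 0 < v) (hv2 : v ≤ 1 / 2) :
    |psi v * sin (c * v)| ≤ π ^ 3 * v / 6 := by
  rw [abs_mul]
  exact (mul_le_of_le_one_right (abs_nonneg _) (abs_sin_le_one _)).trans (abs_psi_le hv hv2)

theorem abs_psi_mul_sin_le_mul_sq (c : ℝ) {v : ℝ} (hv : 0 < v) (hv2 : v ≤ 1 / 2) :
    |psi v * sin (c * v)| ≤ π ^ 3 * |c| * v ^ 2 / 6 := by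
  have hsin : |sin (c * v)| ≤ |c| * v := by
    simpa [abs_mul, abs_of_pos hv] using abs_sin_le_abs (x := c * v)
  rw [abs_mul]
  calc |psi v| * |sin (c * v)| ≤ π ^ 3 * v / 6 * (|c| * v) :=
        mul_le_mul (abs_psi_le hv hv2) hsin (abs_nonneg _) (by positivity)
    _ = π ^ 3 * |c| * v ^ 2 / 6 := by ring

theorem intervalIntegrable_psi_mul_sin (c : ℝ) {a b : ℝ} (ha : a ∈ Icc (0 : ℝ) (1 / 2))
    (hb : b ∈ Icc (0 : ℝ) (1 / 2)) :
    IntervalIntegrable (fun v => psi v * sin (c * v)) volume a b := by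
  refine (intervalIntegrable_const (c := π ^ 3 / 12)).mono_fun'
    (measurable_psi.mul (measurable_const.mul measurable_id).sin).aestronglyMeasurable ?_
  rw [Filter.EventuallyLE, ae_restrict_iff' measurableSet_uIoc]
  refine ae_of_all _ fun v hv => ?_
  have hv0 : 0 < v := lt_of_le_of_lt (le_min ha.1 hb.1) hv.1
  have hv2 : v ≤ 1 / 2 := (uIcc_subset_Icc ha hb (uIoc_subset_uIcc hv)).2
  rw [Real.norm_eq_abs]
  have hcube := mul_le_mul_of_nonneg_left hv2 (by positivity : (0 : ℝ) ≤ π ^ 3)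
  linarith [abs_psi_mul_sin_le c hv0 hv2]

theorem abs_integral_zero_psi_mul_sin_le (c : ℝ) {a : ℝ} (ha : 0 ≤ a) (ha2 : a ≤ 1 / 2) :
    |∫ v in (0 : ℝ)..a, psi v * sin (c * v)| ≤ π ^ 3 * |c| * a ^ 3 / 18 := by
  calc |∫ v in (0 : ℝ)..a, psi v * sin (c * v)|
        ≤ ∫ v in (0 : ℝ)..a, π ^ 3 * |c| / 6 * v ^ 2 :=
        norm_integral_le_of_norm_le (f := fun v => psi v * sin (c * v)) ha
          (ae_of_all _ fun v hv => by
            simpa [mul_div_right_comm] using abs_psi_mul_sin_le_mul_sq c hv.1 (hv.2.trans ha2))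
          (Continuous.intervalIntegrable (by fun_prop) _ _)
    _ = π ^ 3 * |c| * a ^ 3 / 18 := by
        rw [intervalIntegral.integral_const_mul, integral_pow]
        ring

theorem abs_integral_half_psi_mul_sin_le (c : ℝ) {a : ℝ} (ha : 0 ≤ a) (ha2 : a ≤ 1 / 2) :
    |∫ v in a..1 / 2, psi v * sin (c * v)| ≤ π ^ 3 / 6 * (1 / 8 - a ^ 2 / 2) := by
  calc |∫ v in a..1 / 2, psi v * sin (c * v)| ≤ ∫ v in a..1 / 2, π ^ 3 / 6 * v :=
        norm_integral_le_of_norm_le (f := fun v => psi v * sin (c * v)) ha2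
          (ae_of_all _ fun v hv => by
            simpa [mul_div_right_comm] using abs_psi_mul_sin_le c (ha.trans_lt hv.1) hv.2)
          (Continuous.intervalIntegrable (by fun_prop) _ _)
    _ = π ^ 3 / 6 * (1 / 8 - a ^ 2 / 2) := by
        rw [intervalIntegral.integral_const_mul, integral_id]
        ring

theorem abs_integral_psi_mul_sin_le (c : ℝ) {a : ℝ} (ha : 0 ≤ a) (ha2 : a ≤ 1 / 2) :
    |∫ v in (0 : ℝ)..1 / 2, psi v * sin (c * v)|
      ≤ π ^ 3 * |c| * a ^ 3 / 18 + π ^ 3 / 6 * (1 / 8 - a ^ 2 / 2) := by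
  have h0 : (0 : ℝ) ∈ Icc (0 : ℝ) (1 / 2) := ⟨le_rfl, by norm_num⟩
  have hhalf : (1 / 2 : ℝ) ∈ Icc (0 : ℝ) (1 / 2) := ⟨by norm_num, le_rfl⟩
  rw [← integral_add_adjacent_intervals (b := a)
    (intervalIntegrable_psi_mul_sin c h0 ⟨ha, ha2⟩)
    (intervalIntegrable_psi_mul_sin c ⟨ha, ha2⟩ hhalf)]
  exact (abs_add_le _ _).trans (add_le_add (abs_integral_zero_psi_mul_sin_le c ha ha2)
    (abs_integral_half_psi_mul_sin_le c ha ha2))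

theorem abs_integral_psi_mul_sin_dyadic_div_le {u : ℝ} (hu : 0 ≤ u) (ℓ : ℕ) :
    |(∫ v in (0 : ℝ)..1 / 2, psi v * sin (2 ^ (ℓ + 1) * π * u * v)) / 2 ^ ℓ|
      ≤ π ^ 4 * u / 72 * (1 / 8) ^ ℓ + π ^ 3 / 48 * ((1 / 2) ^ ℓ - (1 / 8) ^ ℓ) := by
  have h := abs_integral_psi_mul_sin_le (2 ^ (ℓ + 1) * π * u) (a := (1 / 2) ^ (ℓ + 1))
    (by positivity) (pow_le_of_le_one (by norm_num) (by norm_num) ℓ.succ_ne_zero)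
  rw [abs_div, abs_of_pos (by positivity : (0 : ℝ) < 2 ^ ℓ), div_le_iff₀ (by positivity)]
  refine h.trans_eq ?_
  have h8 : (8 : ℝ) ^ ℓ = (2 ^ ℓ) ^ 3 := by rw [← pow_mul, mul_comm, pow_mul]; norm_num
  rw [abs_of_nonneg (by positivity)]
  simp only [div_pow, one_pow, h8, pow_succ]
  field_simp
  ring

theorem RL_tail_bound_general (L : ℕ) (u : ℝ) (hu : 10 ^ (-5 : ℤ) ≤ u) :
    |∑' ℓ : ℕ, if L + 1 ≤ ℓ then
        (∫ v in (0:ℝ)..(1/2),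
          (Real.cos (Real.pi * v) / Real.sin (Real.pi * v)
            - (Real.pi * v) / (Real.sin (Real.pi * v)) ^ 2)
            * Real.sin (2 ^ (ℓ + 1) * Real.pi * u * v)) / 2 ^ ℓ
      else 0|
    ≤ Real.pi ^ 4 * u / (504 * 8 ^ L)
      + Real.pi ^ 3 / 48 * (1 / 2 ^ L - 1 / (7 * 8 ^ L)) := by
  have hu0 : 0 ≤ u := le_trans (by positivity) hu
  have tail8 := hasSum_geometric_tail (r := (1 / 8 : ℝ)) (by norm_num) (L + 1)
  have tail2 := hasSum_geometric_tail (r := (1 / 2 : ℝ)) (by norm_num) (L + 1)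
  refine (tsum_of_norm_bounded (E := ℝ)
    ((tail8.mul_left (π ^ 4 * u / 72)).add ((tail2.sub tail8).mul_left (π ^ 3 / 48)))
    fun ℓ => ?_).trans_eq ?_
  · split_ifs with h
    · exact abs_integral_psi_mul_sin_dyadic_div_le hu0 ℓ
    · simp
  · simp only [div_pow, one_pow, pow_succ]
    field_simp
    ring

theorem RL_tail_bound (L : ℕ) (u : ℝ) (hu : 10 ^ (-5 : ℤ) ≤ u) (hu1 : u ≤ 1) :
    |∑' ℓ : ℕ, if L + 1 ≤ ℓ then
        (∫ v in (0:ℝ)..(1/2),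
          (Real.cos (Real.pi * v) / Real.sin (Real.pi * v)
            - (Real.pi * v) / (Real.sin (Real.pi * v)) ^ 2)
            * Real.sin (2 ^ (ℓ + 1) * Real.pi * u * v)) / 2 ^ ℓ
      else 0|
    ≤ Real.pi ^ 4 * u / (504 * 8 ^ L)
      + Real.pi ^ 3 / 48 * (1 / 2 ^ L - 1 / (7 * 8 ^ L)) :=
  RL_tail_bound_general L u hu
end

section
/- For every nonnegative integer L and every real u > 0, the tail R̃_L(u) = Σ_{ℓ ≥ L+1} ∫₀^{1/2} φ(v) sin(2^{ℓ+1}πuv)/2^ℓ dv, with φ(v) = cot(πv) − πv/(2 sin²(πv)), satisfies |R̃_L(u)| ≤ π²u/2^{L+3} + π(L+2)log 2 / 2^{L+3}. -/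
open Real
open MeasureTheory intervalIntegral

lemma phi_bound {v : ℝ} (hv0 : 0 < v) (hv : v ≤ 1/2) :
    |Real.cos (Real.pi * v) / Real.sin (Real.pi * v)
      - (Real.pi * v) / (2 * (Real.sin (Real.pi * v)) ^ 2)| ≤ Real.pi / (8 * v) := by
  have hπ := Real.pi_pos
  set s := Real.pi * v with hs_def
  have hs0 : 0 < s := by positivity
  have hs : s ≤ Real.pi / 2 := by rw [hs_def]; nlinarith
  have hsin : 0 < Real.sin s :=
    Real.sin_pos_of_pos_of_lt_pi hs0 (lt_of_le_of_lt hs (by linarith))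
  have hj : 2 / Real.pi * s ≤ Real.sin s := Real.mul_le_sin hs0.le hs
  have hkey : Real.cos s / Real.sin s - s / (2 * Real.sin s ^ 2)
      = (Real.sin (2*s) - s) / (2 * Real.sin s ^ 2) := by
    rw [Real.sin_two_mul]; field_simp
  have habs : |Real.sin (2*s) - s| ≤ s := by
    rw [abs_le]
    constructor
    · have := Real.sin_nonneg_of_nonneg_of_le_pi (x := 2*s) (by linarith) (by linarith)
      linarith
    · have := Real.sin_lt (x := 2*s) (by linarith)
      linarith
  rw [hkey, abs_div, abs_of_pos (by positivity : (0:ℝ) < 2 * Real.sin s ^ 2)]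
  have hstep : |Real.sin (2*s) - s| / (2 * Real.sin s ^ 2)
      ≤ s / (2 * (2 / Real.pi * s) ^ 2) := by
    have hsq : (2 / Real.pi * s) ^ 2 ≤ Real.sin s ^ 2 := by
      apply pow_le_pow_left₀ (by positivity) hj
    gcongr
  refine hstep.trans (le_of_eq ?_)
  rw [hs_def]
  field_simp
  ring

lemma integral_bound (ℓ : ℕ) (u : ℝ) (hu : 0 < u) :
    |∫ v in (0:ℝ)..(1/2),
        (Real.cos (Real.pi * v) / Real.sin (Real.pi * v)
          - (Real.pi * v) / (2 * (Real.sin (Real.pi * v)) ^ 2))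
          * Real.sin (2 ^ (ℓ + 1) * Real.pi * u * v)|
    ≤ Real.pi ^ 2 * u / 8 + Real.pi * ℓ * Real.log 2 / 8 := by
  have hπ := Real.pi_pos
  set f : ℝ → ℝ := fun v =>
    (Real.cos (Real.pi * v) / Real.sin (Real.pi * v)
      - (Real.pi * v) / (2 * (Real.sin (Real.pi * v)) ^ 2))
      * Real.sin (2 ^ (ℓ + 1) * Real.pi * u * v) with hf_def
  set c : ℝ := 2 ^ (ℓ + 1) * Real.pi * u with hc_def
  have hc : 0 < c := by positivity
  set t : ℝ := ((2:ℝ) ^ (ℓ + 1))⁻¹ with ht_def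
  have ht0 : 0 < t := by positivity
  have h2l : (2:ℝ) ≤ 2 ^ (ℓ + 1) := by
    calc (2:ℝ) = 2^1 := by norm_num
    _ ≤ 2 ^ (ℓ+1) := by apply pow_le_pow_right₀ (by norm_num) (by omega)
  have ht : t ≤ 1/2 := by
    rw [ht_def]
    rw [show (1:ℝ)/2 = (2:ℝ)⁻¹ by norm_num]
    exact inv_anti₀ (by norm_num) h2l
  have hmeas : Measurable f := by
    rw [hf_def]
    apply Measurable.mul ?_ (by fun_prop)
    apply Measurable.sub <;> apply Measurable.div <;> fun_prop
  -- pointwise bounds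
  have hbound1 : ∀ v ∈ Set.Ioc (0:ℝ) t, ‖f v‖ ≤ Real.pi * c / 8 := by
    intro v hv
    have hv0 : 0 < v := hv.1
    have hv2 : v ≤ 1/2 := hv.2.trans ht
    rw [hf_def]
    simp only [Real.norm_eq_abs, abs_mul]
    calc |Real.cos (Real.pi * v) / Real.sin (Real.pi * v)
          - Real.pi * v / (2 * Real.sin (Real.pi * v) ^ 2)| * |Real.sin (c * v)|
        ≤ (Real.pi / (8 * v)) * (c * v) := by
          apply mul_le_mul (phi_bound hv0 hv2) ?_ (abs_nonneg _) (by positivity)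
          calc |Real.sin (c*v)| ≤ |c*v| := Real.abs_sin_le_abs
          _ = c * v := abs_of_pos (by positivity)
      _ = Real.pi * c / 8 := by field_simp
  have hbound2 : ∀ v ∈ Set.Ioc t (1/2:ℝ), ‖f v‖ ≤ Real.pi/8 * (1/v) := by
    intro v hv
    have hv0 : 0 < v := ht0.trans hv.1
    rw [hf_def]
    simp only [Real.norm_eq_abs, abs_mul]
    calc |Real.cos (Real.pi * v) / Real.sin (Real.pi * v)
          - Real.pi * v / (2 * Real.sin (Real.pi * v) ^ 2)| * |Real.sin (c * v)|
        ≤ (Real.pi / (8 * v)) * 1 := by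
          apply mul_le_mul (phi_bound hv0 hv.2) (Real.abs_sin_le_one _) (abs_nonneg _)
            (by positivity)
      _ = Real.pi/8 * (1/v) := by field_simp
  -- integrability on [0, t]
  have hint1 : IntervalIntegrable f volume 0 t := by
    rw [intervalIntegrable_iff, Set.uIoc_of_le ht0.le]
    apply Measure.integrableOn_of_bounded (M := Real.pi * c / 8) measure_Ioc_lt_top.ne
      hmeas.aestronglyMeasurable
    filter_upwards [ae_restrict_mem measurableSet_Ioc] with v hv using hbound1 v hv
  -- continuity on [t, 1/2]
  have hsin_ne : ∀ v ∈ Set.Icc t (1/2:ℝ), Real.sin (Real.pi * v) ≠ 0 := by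
    intro v hv
    have hv0 : 0 < v := lt_of_lt_of_le ht0 hv.1
    apply ne_of_gt
    apply Real.sin_pos_of_pos_of_lt_pi (by positivity)
    nlinarith [hv.2]
  have hcont : ContinuousOn f (Set.Icc t (1/2:ℝ)) := by
    apply ContinuousOn.mul ?_ (Continuous.continuousOn (by fun_prop))
    apply ContinuousOn.sub
    · exact ContinuousOn.div (Continuous.continuousOn (by fun_prop))
        (Continuous.continuousOn (by fun_prop)) hsin_ne
    · apply ContinuousOn.div (Continuous.continuousOn (by fun_prop))
        (Continuous.continuousOn (by fun_prop))
      intro v hv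
      have := hsin_ne v hv
      positivity
  have hint2 : IntervalIntegrable f volume t (1/2) := by
    apply ContinuousOn.intervalIntegrable
    rwa [Set.uIcc_of_le ht]
  -- split
  have hsplit : (∫ v in (0:ℝ)..(1/2), f v)
      = (∫ v in (0:ℝ)..t, f v) + ∫ v in t..(1/2), f v :=
    (intervalIntegral.integral_add_adjacent_intervals hint1 hint2).symm
  -- bound first piece
  have hb1 : |∫ v in (0:ℝ)..t, f v| ≤ Real.pi^2 * u / 8 := by
    have := intervalIntegral.norm_integral_le_of_norm_le_const (f := f) (C := Real.pi * c / 8)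
      (a := 0) (b := t) ?_
    · rw [Real.norm_eq_abs] at this
      refine this.trans (le_of_eq ?_)
      rw [sub_zero, abs_of_pos ht0, hc_def, ht_def]
      have h2 : (2:ℝ)^(ℓ+1) ≠ 0 := by positivity
      field_simp
    · intro x hx
      rw [Set.uIoc_of_le ht0.le] at hx
      exact hbound1 x hx
  -- bound second piece
  have hgint : IntervalIntegrable (fun v => Real.pi/8 * (1/v)) volume t (1/2) := by
    apply ContinuousOn.intervalIntegrable
    rw [Set.uIcc_of_le ht]
    apply Continuous.continuousOn (by fun_prop) |>.mul
    apply ContinuousOn.div continuousOn_const (Continuous.continuousOn (by fun_prop))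
    intro v hv
    exact ne_of_gt (lt_of_lt_of_le ht0 hv.1)
  have hgval : (∫ v in t..(1/2:ℝ), Real.pi/8 * (1/v)) = Real.pi/8 * (ℓ * Real.log 2) := by
    rw [intervalIntegral.integral_const_mul, integral_one_div]
    · congr 1
      rw [show (1:ℝ)/2/t = 2^ℓ by rw [ht_def, div_inv_eq_mul, pow_succ]; ring]
      rw [Real.log_pow]
    · rw [Set.uIcc_of_le ht]
      intro h
      exact absurd h.1 (by simp [ht0])
  have hb2 : |∫ v in t..(1/2:ℝ), f v| ≤ Real.pi * ℓ * Real.log 2 / 8 := by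
    have := intervalIntegral.norm_integral_le_abs_of_norm_le (f := f)
      (g := fun v => Real.pi/8 * (1/v)) (a := t) (b := 1/2) (μ := volume) ?_ hgint
    · rw [Real.norm_eq_abs, hgval] at this
      refine this.trans (le_of_eq ?_)
      have hlog : (0:ℝ) ≤ Real.log 2 := Real.log_nonneg (by norm_num)
      rw [abs_of_nonneg (by positivity)]
      ring
    · rw [Set.uIoc_of_le ht]
      filter_upwards [ae_restrict_mem measurableSet_Ioc] with v hv using hbound2 v hv
  calc |∫ v in (0:ℝ)..(1/2), f v| = |(∫ v in (0:ℝ)..t, f v) + ∫ v in t..(1/2), f v| := by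
        rw [hsplit]
    _ ≤ |∫ v in (0:ℝ)..t, f v| + |∫ v in t..(1/2), f v| := abs_add_le _ _
    _ ≤ Real.pi^2 * u / 8 + Real.pi * ℓ * Real.log 2 / 8 := add_le_add hb1 hb2
theorem RtildeL_tail_bound (L : ℕ) (u : ℝ) (hu : 0 < u) :
    |∑' ℓ : ℕ, if L + 1 ≤ ℓ then
        (∫ v in (0:ℝ)..(1/2),
          (Real.cos (Real.pi * v) / Real.sin (Real.pi * v)
            - (Real.pi * v) / (2 * (Real.sin (Real.pi * v)) ^ 2))
            * Real.sin (2 ^ (ℓ + 1) * Real.pi * u * v)) / 2 ^ ℓ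
      else 0|
    ≤ Real.pi ^ 2 * u / 2 ^ (L + 3)
      + Real.pi * (L + 2) * Real.log 2 / 2 ^ (L + 3) := by
  have hπ := Real.pi_pos
  have hlog : (0:ℝ) ≤ Real.log 2 := Real.log_nonneg (by norm_num)
  set A : ℝ := Real.pi ^ 2 * u / 8 with hA_def
  set B : ℝ := Real.pi * Real.log 2 / 8 with hB_def
  have hA : 0 ≤ A := by positivity
  have hB : 0 ≤ B := by positivity
  set a : ℕ → ℝ := fun ℓ => if L + 1 ≤ ℓ then
        (∫ v in (0:ℝ)..(1/2),
          (Real.cos (Real.pi * v) / Real.sin (Real.pi * v)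
            - (Real.pi * v) / (2 * (Real.sin (Real.pi * v)) ^ 2))
            * Real.sin (2 ^ (ℓ + 1) * Real.pi * u * v)) / 2 ^ ℓ
      else 0 with ha_def
  set b : ℕ → ℝ := fun ℓ => if L + 1 ≤ ℓ then (A + B * ℓ) * (1/2) ^ ℓ else 0 with hb_def
  set cs : ℕ → ℝ := fun ℓ => (A + B * ℓ) * (1/2) ^ ℓ with hc_def
  have hcnn : ∀ ℓ, 0 ≤ cs ℓ := fun ℓ => by positivity
  have hbnn : ∀ ℓ, 0 ≤ b ℓ := by
    intro ℓ; rw [hb_def]; dsimp only; split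
    · exact hcnn ℓ
    · exact le_refl 0
  have hhalf : ‖(1/2:ℝ)‖ < 1 := by
    rw [Real.norm_eq_abs, abs_of_pos] <;> norm_num
  have hcsum : Summable cs := by
    have h1 : Summable (fun ℓ : ℕ => A * (1/2:ℝ)^ℓ) :=
      (summable_geometric_of_lt_one (by norm_num) (by norm_num)).mul_left A
    have h2 : Summable (fun ℓ : ℕ => B * ((ℓ:ℝ) * (1/2:ℝ)^ℓ)) := by
      apply Summable.mul_left B
      exact (hasSum_coe_mul_geometric_of_norm_lt_one hhalf).summable
    have := h1.add h2
    apply this.congr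
    intro ℓ; rw [hc_def]; ring
  have hbsum : Summable b := Summable.of_nonneg_of_le hbnn (fun ℓ => by
    rw [hb_def]; dsimp only; split
    · exact le_refl _
    · exact hcnn ℓ) hcsum
  have hab : ∀ ℓ, ‖a ℓ‖ ≤ b ℓ := by
    intro ℓ
    rw [ha_def, hb_def]
    dsimp only
    split
    · rw [norm_div, Real.norm_eq_abs, Real.norm_eq_abs, abs_of_pos (by positivity : (0:ℝ) < 2^ℓ)]
      rw [div_le_iff₀ (by positivity : (0:ℝ) < 2^ℓ)]
      have := integral_bound ℓ u hu
      calc |∫ v in (0:ℝ)..(1/2),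
          (Real.cos (Real.pi * v) / Real.sin (Real.pi * v)
            - (Real.pi * v) / (2 * (Real.sin (Real.pi * v)) ^ 2))
            * Real.sin (2 ^ (ℓ + 1) * Real.pi * u * v)|
          ≤ A + B * ℓ := by rw [hA_def, hB_def]; calc _ ≤ _ := this
                            _ = _ := by ring
        _ = (A + B * ℓ) * (1/2)^ℓ * 2^ℓ := by
            rw [mul_assoc, ← mul_pow]
            norm_num
    · simp
  have hasum : Summable (fun ℓ => ‖a ℓ‖) :=
    Summable.of_nonneg_of_le (fun ℓ => norm_nonneg _) hab hbsum
  have h1 : |∑' ℓ, a ℓ| ≤ ∑' ℓ, ‖a ℓ‖ := by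
    rw [← Real.norm_eq_abs]
    exact norm_tsum_le_tsum_norm hasum
  have h2 : (∑' ℓ, ‖a ℓ‖) ≤ ∑' ℓ, b ℓ := Summable.tsum_le_tsum hab hasum hbsum
  -- compute tsum b
  have hshift : (∑' ℓ, b ℓ) = ∑' i, b (i + (L+1)) := by
    rw [← Summable.sum_add_tsum_nat_add (L+1) hbsum]
    rw [Finset.sum_eq_zero, zero_add]
    intro i hi
    simp only [Finset.mem_range] at hi
    simp only [hb_def]
    rw [if_neg (by omega)]
  have hval : HasSum (fun i : ℕ => b (i + (L+1))) ((A + B * (L+2)) * (1/2)^L) := by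
    have hg : HasSum (fun i : ℕ => (1/2:ℝ)^i) 2 := by
      have := hasSum_geometric_of_lt_one (r := (1/2:ℝ)) (by norm_num) (by norm_num)
      norm_num at this
      exact this
    have hng : HasSum (fun i : ℕ => (i:ℝ) * (1/2:ℝ)^i) 2 := by
      have := hasSum_coe_mul_geometric_of_norm_lt_one hhalf
      norm_num at this
      exact this
    have h3 := ((hg.mul_left (A + B*(L+1))).add (hng.mul_left B)).mul_left ((1/2:ℝ)^(L+1))
    have he : (fun i : ℕ => (1/2:ℝ)^(L+1) *
        ((A + B*(L+1)) * (1/2)^i + B * ((i:ℝ) * (1/2)^i))) = fun i => b (i + (L+1)) := by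
      funext i
      rw [hb_def]
      dsimp only
      rw [if_pos (by omega)]
      rw [pow_add]
      push_cast
      ring
    rw [he] at h3
    have hv : (A + B * (L+2)) * (1/2:ℝ)^L = (1/2:ℝ)^(L+1) * ((A + B*(L+1)) * 2 + B * 2) := by
      rw [pow_succ]
      ring
    rw [hv]
    exact h3
  have htsumb : (∑' ℓ, b ℓ) = (A + B * (L+2)) * (1/2)^L := by
    rw [hshift, hval.tsum_eq]
  have hfinal : (A + B * (L+2)) * (1/2:ℝ)^L
      = Real.pi ^ 2 * u / 2 ^ (L + 3) + Real.pi * (L + 2) * Real.log 2 / 2 ^ (L + 3) := by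
    have hp : (2:ℝ) ^ (L+3) = 2^L * 8 := by rw [pow_add]; norm_num
    rw [hA_def, hB_def, hp, one_div, inv_pow]
    have h2L : (0:ℝ) < 2^L := by positivity
    field_simp
  calc |∑' ℓ, a ℓ| ≤ ∑' ℓ, b ℓ := h1.trans h2
    _ = _ := by rw [htsumb, hfinal]
end
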